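/- arXiv:2309.04450 — 4 statements merged into one kernel-verified Lean document; each statement's English description precedes it below -/
import Mathlib

section
/- Every signed theta graph admits a homomorphism to C₃*, where C₃* is the positive triangle with a negative loop on each vertex. -/
/-- A signed graph: a vertex type with a symmetric positive-edge relation and a
symmetric negative-edge relation (loops and "digons" are allowed). -/
structure SignedGraph (V : Type*) where
  pos : V → V → Prop
  neg : V → V → Prop
  pos_symm : Symmetric pos
  neg_symm : Symmetric neg

namespace SignedGraph

variable {V W : Type*}

/-- Switching at the vertex set `{v | s v = true}`: signs of edges with exactly one
endpoint in the set are flipped; loops and edges with both or no endpoints in the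
set are unchanged. -/
def switch (G : SignedGraph V) (s : V → Bool) : SignedGraph V where
  pos u v := if s u = s v then G.pos u v else G.neg u v
  neg u v := if s u = s v then G.neg u v else G.pos u v
  pos_symm := by
    intro u v h
    by_cases hs : s u = s v
    · rw [if_pos hs] at h; rw [if_pos hs.symm]; exact G.pos_symm h
    · rw [if_neg hs] at h; rw [if_neg (fun e => hs e.symm)]; exact G.neg_symm h
  neg_symm := by
    intro u v h
    by_cases hs : s u = s v
    · rw [if_pos hs] at h; rw [if_pos hs.symm]; exact G.neg_symm h
    · rw [if_neg hs] at h; rw [if_neg (fun e => hs e.symm)]; exact G.pos_symm h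

/-- An edge-sign preserving homomorphism maps positive edges to positive edges and
negative edges to negative edges. -/
def IsESPHom (G : SignedGraph V) (H : SignedGraph W) (φ : V → W) : Prop :=
  (∀ u v, G.pos u v → H.pos (φ u) (φ v)) ∧ (∀ u v, G.neg u v → H.neg (φ u) (φ v))

/-- A signed graph admits a homomorphism to another iff some switching of it admits
an edge-sign preserving homomorphism (this preserves adjacency and signs of closed
walks). -/
def HasHomTo (G : SignedGraph V) (H : SignedGraph W) : Prop :=
  ∃ (s : V → Bool) (φ : V → W), IsESPHom (G.switch s) H φ

/-- `H` is a subgraph of `G` (on the same vertex set). -/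
def IsSubgraph (H G : SignedGraph V) : Prop :=
  (∀ u v, H.pos u v → G.pos u v) ∧ (∀ u v, H.neg u v → G.neg u v)

/-- The number of edges of a finite signed graph (unordered pairs, each sign
counted separately). -/
noncomputable def edgeCount (G : SignedGraph V) : ℕ :=
  (Sym2.fromRel (⟨fun _ _ h => G.pos_symm h⟩ : Std.Symm G.pos)).ncard +
    (Sym2.fromRel (⟨fun _ _ h => G.neg_symm h⟩ : Std.Symm G.neg)).ncard

/-- The degree of a vertex: the number of its neighbours (via an edge of either sign). -/
noncomputable def degree (G : SignedGraph V) (v : V) : ℕ :=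
  {u | G.pos v u ∨ G.neg v u}.ncard

/-- The underlying simple graph of a signed graph (loops discarded). -/
def underlying (G : SignedGraph V) : SimpleGraph V :=
  SimpleGraph.fromRel (fun u v => G.pos u v ∨ G.neg u v)

end SignedGraph

/-- `C₃*`: the all-positive triangle with a negative loop at each vertex. -/
def C3star : SignedGraph (Fin 3) where
  pos u v := u ≠ v
  neg u v := u = v
  pos_symm := fun _ _ h => h.symm
  neg_symm := fun _ _ h => h.symm

/-- A signed graph is `C₃*`-critical: it has no digon and no positive loop (the
girth conditions of Definition 2.7), admits no homomorphism to `C₃*`, but every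
proper subgraph does. -/
def IsC3Critical {V : Type*} (G : SignedGraph V) : Prop :=
  (∀ u v, ¬ (G.pos u v ∧ G.neg u v)) ∧
  (∀ v, ¬ G.pos v v) ∧
  ¬ G.HasHomTo C3star ∧
  ∀ H : SignedGraph V, H.IsSubgraph G → H ≠ G → H.HasHomTo C3star

/-- The relation `E` is the edge relation of a theta graph: a simple graph that is
the union of three internally disjoint paths (of lengths `a, b, c ≥ 1`, at most one
of which is a single edge) sharing the same two distinct end vertices. -/
def IsThetaGraph {V : Type*} (E : V → V → Prop) : Prop :=
  ∃ (a b c : ℕ) (p q r : ℕ → V),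
    1 ≤ a ∧ 1 ≤ b ∧ 1 ≤ c ∧
    (a = 1 → b ≠ 1) ∧ (a = 1 → c ≠ 1) ∧ (b = 1 → c ≠ 1) ∧
    p 0 = q 0 ∧ q 0 = r 0 ∧ p a = q b ∧ q b = r c ∧ p 0 ≠ p a ∧
    (∀ i ≤ a, ∀ j ≤ a, p i = p j → i = j) ∧
    (∀ i ≤ b, ∀ j ≤ b, q i = q j → i = j) ∧
    (∀ i ≤ c, ∀ j ≤ c, r i = r j → i = j) ∧
    (∀ i, 0 < i → i < a → ∀ j, 0 < j → j < b → p i ≠ q j) ∧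
    (∀ i, 0 < i → i < a → ∀ j, 0 < j → j < c → p i ≠ r j) ∧
    (∀ i, 0 < i → i < b → ∀ j, 0 < j → j < c → q i ≠ r j) ∧
    (∀ u v, E u v ↔
      ((∃ i < a, (p i = u ∧ p (i + 1) = v) ∨ (p i = v ∧ p (i + 1) = u)) ∨
       (∃ i < b, (q i = u ∧ q (i + 1) = v) ∨ (q i = v ∧ q (i + 1) = u)) ∨
       (∃ i < c, (r i = u ∧ r (i + 1) = v) ∨ (r i = v ∧ r (i + 1) = u))))

/-! Send the branch vertices `x`, `y` to colours `0` and `1` of `C₃*`, leave `x` unswitched,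
and switch `y` exactly when `xy` (if it is an edge) is negative. On a path of length at least
two, a walk `0 → 1` in the triangle can be chosen with no monochromatic step or with exactly
one (the last), and the switching propagated from `x` makes precisely the monochromatic steps
negative; one of the two choices reaches `y` with the prescribed switching. A path of length
one is the edge `xy` itself, which has the right sign by that prescription. Since the paths
share only their ends, these maps glue. -/

namespace SignedGraph

variable {V : Type*}

lemma neg_comm (G : SignedGraph V) {u v : V} : G.neg u v ↔ G.neg v u :=
  ⟨fun h => G.neg_symm h, fun h => G.neg_symm h⟩

/-- Without digons, an edge `uv` is negative after switching by `s` exactly when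
`G.neg u v ↔ s u = s v`. -/
lemma isESPHom_switch_C3star {G : SignedGraph V} (hsigned : ∀ u v, ¬ (G.pos u v ∧ G.neg u v))
    {s : V → Bool} {φ : V → Fin 3}
    (h : ∀ u v, G.pos u v ∨ G.neg u v → ((G.neg u v ↔ s u = s v) ↔ φ u = φ v)) :
    IsESPHom (G.switch s) C3star φ := by
  constructor <;> intro u v huv <;> by_cases hs : s u = s v <;>
    simp only [switch, hs, if_true, if_false] at huv <;>
    have := hsigned u v <;> have := h u v (by tauto) <;> simp only [C3star] <;> tauto

end SignedGraph

def prefixParity (f : ℕ → Bool) : ℕ → Bool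
  | 0 => false
  | n + 1 => prefixParity f n ^^ f n

def walkColoring (m i : ℕ) : Fin 3 := if m ≤ i then 1 else if Even i then 0 else 2

lemma walkColoring_zero {m : ℕ} (hm : 0 < m) : walkColoring m 0 = 0 := by
  simp [walkColoring, Nat.not_le_of_lt hm]

lemma walkColoring_of_le {m i : ℕ} (h : m ≤ i) : walkColoring m i = 1 := by
  simp [walkColoring, h]

lemma walkColoring_eq_succ_iff {m i : ℕ} : walkColoring m i = walkColoring m (i + 1) ↔ m ≤ i := by
  unfold walkColoring
  by_cases hi : m ≤ i
  · simp [hi, show m ≤ i + 1 by omega]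
  · by_cases he : Even i <;> split_ifs <;> simp_all [Nat.even_add_one]

/-- The switching of a path with signs `f` after which the edges before step `m` are positive
and the edge at step `m` is negative. -/
def pathSwitching (f : ℕ → Bool) (m i : ℕ) : Bool := prefixParity f i ^^ decide (m < i)

lemma pathSwitching_eq_succ_iff {f : ℕ → Bool} {m i : ℕ} (hi : i ≤ m) :
    pathSwitching f m i = pathSwitching f m (i + 1) ↔ f i = decide (m = i) := by
  simp only [pathSwitching, prefixParity, Nat.lt_succ_iff, Nat.not_lt_of_le hi, decide_false]
  cases prefixParity f i <;> cases f i <;> by_cases hm : m = i <;> simp [hm] <;> omega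

/-- A path of length `n` with signs `f`, whose ends are pinned to (unswitched, colour `0`)
and (switching `t`, colour `1`), maps to `C₃*` unless it is a single edge of the wrong sign. -/
lemma exists_switching_coloring_of_path (f : ℕ → Bool) (t : Bool) {n : ℕ} (hn : 0 < n)
    (h1 : n = 1 → f 0 = t) :
    ∃ (S : ℕ → Bool) (C : ℕ → Fin 3), S 0 = false ∧ C 0 = 0 ∧ S n = t ∧ C n = 1 ∧
      ∀ i < n, ((f i = true ↔ S i = S (i + 1)) ↔ C i = C (i + 1)) := by
  obtain ⟨m, hm0, hnm, hmn, hSn⟩ : ∃ m, 0 < m ∧ n ≤ m + 1 ∧ m ≤ n ∧ pathSwitching f m n = t := by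
    by_cases ht : prefixParity f n = t
    · exact ⟨n, hn, by omega, le_rfl, by simp [pathSwitching, ht]⟩
    · refine ⟨n - 1, ?_, by omega, by omega, ?_⟩
      · by_contra h
        obtain rfl : n = 1 := by omega
        exact ht (by simpa [prefixParity] using h1 rfl)
      · cases t <;> simp_all [pathSwitching, show n - 1 < n by omega]
  refine ⟨pathSwitching f m, walkColoring m, by simp [pathSwitching, prefixParity],
    walkColoring_zero hm0, hSn, walkColoring_of_le hmn, fun i hi => ?_⟩
  rw [pathSwitching_eq_succ_iff (by omega), walkColoring_eq_succ_iff]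
  cases f i <;> by_cases hmi : m = i <;> simp [hmi] <;> omega

/-- A family of `x`–`y` paths of positive lengths that pairwise meet only at their ends and
carry every edge of `E`: a generalized theta graph, possibly with extra isolated vertices. -/
structure ThetaPaths {V : Type*} (E : V → V → Prop) (ι : Type*) where
  x : V
  y : V
  len : ι → ℕ
  path : ι → ℕ → V
  len_pos : ∀ k, 0 < len k
  path_zero : ∀ k, path k 0 = x
  path_len : ∀ k, path k (len k) = y
  eq_of_path_eq : ∀ k k' i j, i ≤ len k → j ≤ len k' → path k i = path k' j →
    (k = k' ∧ i = j) ∨ (i = 0 ∧ j = 0) ∨ (i = len k ∧ j = len k')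
  exists_path_of_adj : ∀ u v, E u v → ∃ k, ∃ i < len k,
    (path k i = u ∧ path k (i + 1) = v) ∨ (path k i = v ∧ path k (i + 1) = u)

namespace ThetaPaths

variable {V ι α : Type*} {E : V → V → Prop}

lemma exists_glue [Nonempty α] (T : ThetaPaths E ι) (Λ : ι → ℕ → α) {a₀ a₁ : α}
    (h₀ : ∀ k, Λ k 0 = a₀) (h₁ : ∀ k, Λ k (T.len k) = a₁) :
    ∃ g : V → α, ∀ k, ∀ i ≤ T.len k, g (T.path k i) = Λ k i := by
  have hfac : Function.FactorsThrough (fun e : Σ k, Fin (T.len k + 1) => Λ e.1 e.2)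
      (fun e => T.path e.1 e.2) := by
    rintro ⟨k, i, hi⟩ ⟨k', j, hj⟩ (h : T.path k i = T.path k' j)
    rcases T.eq_of_path_eq k k' i j (by omega) (by omega) h with ⟨rfl, rfl⟩ | ⟨rfl, rfl⟩ | ⟨rfl, rfl⟩
    · rfl
    · exact (h₀ k).trans (h₀ k').symm
    · exact (h₁ k).trans (h₁ k').symm
  obtain ⟨g, hg⟩ := (Function.factorsThrough_iff _).mp hfac
  exact ⟨g, fun k i hi => (congrFun hg ⟨k, i, by omega⟩).symm⟩

end ThetaPaths

lemma meet_at_ends_of_internally_disjoint {V : Type*} {p q : ℕ → V} {a b : ℕ}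
    (hp : ∀ i ≤ a, ∀ j ≤ a, p i = p j → i = j) (hq : ∀ i ≤ b, ∀ j ≤ b, q i = q j → i = j)
    (h₀ : p 0 = q 0) (h₁ : p a = q b)
    (hpq : ∀ i, 0 < i → i < a → ∀ j, 0 < j → j < b → p i ≠ q j)
    {i j : ℕ} (hi : i ≤ a) (hj : j ≤ b) (h : p i = q j) : (i = 0 ∧ j = 0) ∨ (i = a ∧ j = b) := by
  by_cases hi0 : i = 0
  · subst hi0; exact Or.inl ⟨rfl, hq j hj 0 (Nat.zero_le b) (h.symm.trans h₀)⟩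
  by_cases hia : i = a
  · subst hia; exact Or.inr ⟨rfl, hq j hj b le_rfl (h.symm.trans h₁)⟩
  by_cases hj0 : j = 0
  · exact absurd (hp i hi 0 (Nat.zero_le a) (h.trans (hj0 ▸ h₀.symm))) hi0
  by_cases hjb : j = b
  · exact absurd (hp i hi a le_rfl (h.trans (hjb ▸ h₁.symm))) hia
  exact absurd h (hpq i (by omega) (by omega) j (by omega) (by omega))

lemma IsThetaGraph.nonempty_thetaPaths {V : Type*} {E : V → V → Prop} (h : IsThetaGraph E) :
    Nonempty (ThetaPaths E (Fin 3)) := by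
  obtain ⟨a, b, c, p, q, r, ha, hb, hc, -, -, -, hpq₀, hqr₀, hpqₗ, hqrₗ, -, hp, hq, hr,
    hPQ, hPR, hQR, hE⟩ := h
  have hpr₀ := hpq₀.trans hqr₀
  have hprₗ := hpqₗ.trans hqrₗ
  have PQ := @meet_at_ends_of_internally_disjoint _ _ _ _ _ hp hq hpq₀ hpqₗ hPQ
  have PR := @meet_at_ends_of_internally_disjoint _ _ _ _ _ hp hr hpr₀ hprₗ hPR
  have QR := @meet_at_ends_of_internally_disjoint _ _ _ _ _ hq hr hqr₀ hqrₗ hQR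
  refine ⟨⟨p 0, p a, ![a, b, c], ![p, q, r], ?_, ?_, ?_, ?_, ?_⟩⟩
  · intro k; fin_cases k <;> simp <;> omega
  · intro k; fin_cases k <;> simp [hpq₀, hqr₀]
  · intro k; fin_cases k <;> simp [hpqₗ, hqrₗ]
  · intro k k' i j hi hj e
    fin_cases k <;> fin_cases k' <;> simp at hi hj e ⊢
    exacts [Or.inl (hp i hi j hj e), PQ hi hj e, PR hi hj e,
      (PQ hj hi e.symm).imp And.symm And.symm, Or.inl (hq i hi j hj e), QR hi hj e,
      (PR hj hi e.symm).imp And.symm And.symm, (QR hj hi e.symm).imp And.symm And.symm,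
      Or.inl (hr i hi j hj e)]
  · intro u v huv
    rcases (hE u v).mp huv with ⟨i, hi, h⟩ | ⟨i, hi, h⟩ | ⟨i, hi, h⟩
    exacts [⟨0, i, hi, h⟩, ⟨1, i, hi, h⟩, ⟨2, i, hi, h⟩]

theorem ThetaPaths.hasHomTo_C3star {V ι : Type*} {G : SignedGraph V}
    (T : ThetaPaths (fun u v => G.pos u v ∨ G.neg u v) ι)
    (hsigned : ∀ u v, ¬ (G.pos u v ∧ G.neg u v)) : G.HasHomTo C3star := by
  classical
  set f : ι → ℕ → Bool := fun k i => decide (G.neg (T.path k i) (T.path k (i + 1))) with hf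
  have hsingle : ∀ k, T.len k = 1 → f k 0 = decide (G.neg T.x T.y) := by
    intro k hk
    simp only [hf, zero_add, T.path_zero, ← hk, T.path_len]
  choose S C hS₀ hC₀ hSₗ hCₗ hstep using fun k =>
    exists_switching_coloring_of_path (f k) _ (T.len_pos k) (hsingle k)
  obtain ⟨g, hg⟩ := T.exists_glue (fun k i => (S k i, C k i))
    (fun k => by rw [hS₀, hC₀]) (fun k => by rw [hSₗ, hCₗ])
  refine ⟨fun v => (g v).1, fun v => (g v).2, SignedGraph.isESPHom_switch_C3star hsigned ?_⟩
  have hpath : ∀ k, ∀ i < T.len k, ((G.neg (T.path k i) (T.path k (i + 1)) ↔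
      (g (T.path k i)).1 = (g (T.path k (i + 1))).1) ↔
      (g (T.path k i)).2 = (g (T.path k (i + 1))).2) := by
    intro k i hi
    rw [hg k i hi.le, hg k (i + 1) hi]
    simpa only [hf, decide_eq_true_iff] using hstep k i hi
  intro u v huv
  obtain ⟨k, i, hi, ⟨rfl, rfl⟩ | ⟨rfl, rfl⟩⟩ := T.exists_path_of_adj u v huv
  · exact hpath k i hi
  · simpa only [G.neg_comm, eq_comm] using hpath k i hi

/-- Every signed theta graph admits a homomorphism to `C₃*`. -/
theorem signed_theta_hasHomTo_C3star {V : Type*} (G : SignedGraph V)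
    (hsigned : ∀ u v, ¬ (G.pos u v ∧ G.neg u v))
    (htheta : IsThetaGraph (fun u v => G.pos u v ∨ G.neg u v)) :
    G.HasHomTo C3star := by
  obtain ⟨T⟩ := htheta.nonempty_thetaPaths
  exact T.hasHomTo_C3star hsigned
end

section
/- No C₃*-critical signed graph contains a cut-edge. -/
/-- Deleting the (unordered) edge `ab` from a signed graph (both signs removed). -/
def SignedGraph.deleteEdge {V : Type*} (G : SignedGraph V) (a b : V) : SignedGraph V where
  pos u v := G.pos u v ∧ ¬ ((u = a ∧ v = b) ∨ (u = b ∧ v = a))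
  neg u v := G.neg u v ∧ ¬ ((u = a ∧ v = b) ∨ (u = b ∧ v = a))
  pos_symm := by
    intro u v h
    exact ⟨G.pos_symm h.1, fun hc => h.2 (by tauto)⟩
  neg_symm := by
    intro u v h
    exact ⟨G.neg_symm h.1, fun hc => h.2 (by tauto)⟩

namespace SignedGraph

variable {V : Type*}

def Adj (G : SignedGraph V) (u v : V) : Prop := G.pos u v ∨ G.neg u v

instance (G : SignedGraph V) : Std.Symm G.Adj :=
  ⟨fun _ _ => Or.imp (fun h => G.pos_symm h) (fun h => G.neg_symm h)⟩

theorem deleteEdge_isSubgraph (G : SignedGraph V) (a b : V) : (G.deleteEdge a b).IsSubgraph G :=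
  ⟨fun _ _ h => h.1, fun _ _ h => h.1⟩

theorem deleteEdge_ne {G : SignedGraph V} {a b : V} (hab : G.Adj a b) : G.deleteEdge a b ≠ G := by
  intro h
  have hab' : (G.deleteEdge a b).Adj a b := by rwa [h]
  rcases hab' with ⟨-, hne⟩ | ⟨-, hne⟩ <;> exact hne (Or.inl ⟨rfl, rfl⟩)

theorem eq_of_adj_of_reachable_deleteEdge {G : SignedGraph V} {a b u v : V}
    (ha : ¬ Relation.ReflTransGen (G.deleteEdge a b).Adj b a)
    (hu : Relation.ReflTransGen (G.deleteEdge a b).Adj b u)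
    (hv : ¬ Relation.ReflTransGen (G.deleteEdge a b).Adj b v) (huv : G.Adj u v) :
    u = b ∧ v = a := by
  by_cases hpair : (u = a ∧ v = b) ∨ (u = b ∧ v = a)
  · rcases hpair with ⟨rfl, -⟩ | huv'
    · exact absurd hu ha
    · exact huv'
  · exact absurd (hu.tail (huv.imp (⟨·, hpair⟩) (⟨·, hpair⟩))) hv

/-- The constraint that a pair `u v` imposes on a switching `s` and a colouring `φ` for `φ` to be
an edge-sign preserving homomorphism `G.switch s → C₃*`. -/
def C3Compatible (G : SignedGraph V) (s : V → Bool) (φ : V → Fin 3) (u v : V) : Prop :=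
  (G.pos u v → (s u = s v ↔ φ u ≠ φ v)) ∧ (G.neg u v → (s u = s v ↔ φ u = φ v))

theorem isESPHom_switch_C3star_iff {G : SignedGraph V} {s : V → Bool} {φ : V → Fin 3} :
    IsESPHom (G.switch s) C3star φ ↔ ∀ u v, G.C3Compatible s φ u v := by
  simp only [IsESPHom, switch, C3star, C3Compatible]
  constructor
  · rintro ⟨hp, hn⟩ u v
    constructor <;> intro h <;> by_cases hs : s u = s v
    · simp only [hs, true_iff]; exact hp u v (by rwa [if_pos hs])
    · simp only [hs, false_iff, not_not]; exact hn u v (by rwa [if_neg hs])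
    · simp only [hs, true_iff]; exact hn u v (by rwa [if_pos hs])
    · simp only [hs, false_iff]; exact hp u v (by rwa [if_neg hs])
  · intro h
    constructor <;> intro u v <;> by_cases hs : s u = s v <;> simp only [hs, if_true, if_false] <;> intro he
    · exact ((h u v).1 he).mp hs
    · exact fun e => hs (((h u v).2 he).mpr e)
    · exact ((h u v).2 he).mp hs
    · exact not_not.mp (mt ((h u v).1 he).mpr hs)

variable {G : SignedGraph V} {s s' : V → Bool} {φ φ' : V → Fin 3} {u v : V}

theorem C3Compatible.symm (h : G.C3Compatible s φ u v) : G.C3Compatible s φ v u :=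
  ⟨fun hp => by rw [eq_comm, ne_comm]; exact h.1 (G.pos_symm hp),
    fun hn => by rw [eq_comm, @eq_comm _ (φ v)]; exact h.2 (G.neg_symm hn)⟩

theorem C3Compatible.congr (h : G.C3Compatible s φ u v) (hsu : s' u = s u) (hsv : s' v = s v)
    (hφu : φ' u = φ u) (hφv : φ' v = φ v) : G.C3Compatible s' φ' u v := by
  simpa only [C3Compatible, hsu, hsv, hφu, hφv] using h

/-- `xor · c` switches either all vertices or none, which changes no edge sign, and every
permutation of `Fin 3` is an automorphism of `C₃*`. -/
theorem C3Compatible.xor_comp (h : G.C3Compatible s φ u v) (c : Bool) (σ : Equiv.Perm (Fin 3)) :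
    G.C3Compatible (fun w => xor (s w) c) (σ ∘ φ) u v := by
  simpa only [C3Compatible, Bool.xor_left_inj, Function.comp_apply, ne_eq,
    EmbeddingLike.apply_eq_iff_eq] using h

theorem C3Compatible.of_deleteEdge {a b : V} (h : (G.deleteEdge a b).C3Compatible s φ u v)
    (hne : ¬ ((u = a ∧ v = b) ∨ (u = b ∧ v = a))) : G.C3Compatible s φ u v :=
  ⟨fun hp => h.1 ⟨hp, hne⟩, fun hn => h.2 ⟨hn, hne⟩⟩

theorem C3Compatible.piecewise (h : G.C3Compatible s φ u v) (C : Set V)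
    [∀ w, Decidable (w ∈ C)] (c : Bool) (σ : Equiv.Perm (Fin 3)) (huv : u ∈ C ↔ v ∈ C) :
    G.C3Compatible (C.piecewise (fun w => xor (s w) c) s) (C.piecewise (σ ∘ φ) φ) u v := by
  by_cases hu : u ∈ C
  · have hv := huv.1 hu
    exact (h.xor_comp c σ).congr (by simp [hu]) (by simp [hv]) (by simp [hu]) (by simp [hv])
  · have hv := mt huv.2 hu
    exact h.congr (by simp [hu]) (by simp [hv]) (by simp [hu]) (by simp [hv])

theorem C3Compatible.of_not_adj (h : ¬ G.Adj u v) : G.C3Compatible s φ u v :=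
  ⟨fun hp => absurd (Or.inl hp) h, fun hn => absurd (Or.inr hn) h⟩

theorem exists_C3star_colour_of_not_digon {a b : V} (hdigon : ¬ (G.pos a b ∧ G.neg a b))
    (x : Fin 3) : ∃ y : Fin 3, (G.pos a b → x ≠ y) ∧ (G.neg a b → x = y) := by
  by_cases hn : G.neg a b
  · exact ⟨x, fun hp => absurd ⟨hp, hn⟩ hdigon, fun _ => rfl⟩
  · exact ⟨x + 1, fun _ => by revert x; decide, fun h => absurd h hn⟩

theorem hasHomTo_C3star_of_deleteEdge {a b : V} (hdigon : ¬ (G.pos a b ∧ G.neg a b))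
    (hcut : ¬ Relation.ReflTransGen (G.deleteEdge a b).Adj a b)
    (h : (G.deleteEdge a b).HasHomTo C3star) : G.HasHomTo C3star := by
  classical
  obtain ⟨s, φ, hφ⟩ := h
  rw [isESPHom_switch_C3star_iff] at hφ
  set C : Set V := {v | Relation.ReflTransGen (G.deleteEdge a b).Adj b v}
  have hb : b ∈ C := Relation.ReflTransGen.refl
  have ha : a ∉ C := fun h => hcut (Std.Symm.symm _ _ h)
  have hpair : ∀ u v, (u ∈ C ↔ v ∈ C) → ¬ ((u = a ∧ v = b) ∨ (u = b ∧ v = a)) := by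
    rintro u v huv (⟨rfl, rfl⟩ | ⟨rfl, rfl⟩) <;> simp_all
  obtain ⟨t, ht⟩ := exists_C3star_colour_of_not_digon hdigon (φ a)
  set c := xor (s a) (s b)
  set σ := Equiv.swap (φ b) t
  set s' := C.piecewise (fun w => xor (s w) c) s
  set φ' := C.piecewise (σ ∘ φ) φ
  have hcross : ∀ u v, u ∈ C → v ∉ C → G.C3Compatible s' φ' u v := by
    intro u v hu hv
    by_cases huv : G.Adj u v
    · obtain ⟨hub, hva⟩ := eq_of_adj_of_reachable_deleteEdge ha hu hv huv
      subst u v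
      have hs' : s' a = s' b := by simp [s', c, hb, ha, Bool.xor_left_comm]
      have hφ'a : φ' a = φ a := by simp [φ', ha]
      have hφ'b : φ' b = t := by simp [φ', σ, hb]
      refine C3Compatible.symm ⟨fun hp => ?_, fun hn => ?_⟩
      · simpa [hs', hφ'a, hφ'b] using ht.1 hp
      · simpa [hs', hφ'a, hφ'b] using ht.2 hn
    · exact .of_not_adj huv
  refine ⟨s', φ', isESPHom_switch_C3star_iff.2 fun u v => ?_⟩
  by_cases huv : u ∈ C ↔ v ∈ C
  · exact ((hφ u v).of_deleteEdge (hpair u v huv)).piecewise C c σ huv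
  by_cases hu : u ∈ C
  · exact hcross u v hu (fun hv => huv ⟨fun _ => hv, fun _ => hu⟩)
  · exact (hcross v u (by tauto) hu).symm

end SignedGraph

/-- No `C₃*`-critical signed graph contains a cut-edge: for every edge `ab` of a
`C₃*`-critical signed graph, the endpoints `a` and `b` are still joined by a walk
after deleting the edge `ab`. -/
theorem c3critical_no_cut_edge {V : Type*} (G : SignedGraph V)
    (hcrit : IsC3Critical G) (a b : V) (hab : G.pos a b ∨ G.neg a b) :
    Relation.ReflTransGen
      (fun u v => (G.deleteEdge a b).pos u v ∨ (G.deleteEdge a b).neg u v) a b := by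
  obtain ⟨hdigon, -, hnohom, hsub⟩ := hcrit
  by_contra hcut
  exact hnohom <| SignedGraph.hasHomTo_C3star_of_deleteEdge (hdigon a b) hcut <|
    hsub _ (G.deleteEdge_isSubgraph a b) (SignedGraph.deleteEdge_ne hab)
end

section
/- Let T be a signed triangle on vertices v₁,v₂,v₃ with at most one negative edge, and let S₁,S₂,S₃ be subsets of the vertex set of C₃* with |S₁| ≥ 2, |S₂| ≥ 2, and S₃ = V(C₃*). Then there exists an edge-sign preserving homomorphism φ of T to C₃* with φ(vᵢ) ∈ Sᵢ for each i. -/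
set_option synthInstance.maxSize 512 in
lemma triangle_mapping_key : ∀ x1 y1 x2 y2 : Fin 3, x1 ≠ y1 → x2 ≠ y2 →
    ∀ s12 s23 s31 : Bool, s12.toNat + s23.toNat + s31.toNat ≤ 1 →
    ∃ a1 a2 a3 : Fin 3, (a1 = x1 ∨ a1 = y1) ∧ (a2 = x2 ∨ a2 = y2) ∧
      (if s12 then a1 = a2 else a1 ≠ a2) ∧
      (if s23 then a2 = a3 else a2 ≠ a3) ∧
      (if s31 then a3 = a1 else a3 ≠ a1) := by decide

/-- Lemma 2.8(1): Let `T` be a signed triangle on `v₁,v₂,v₃` with edge signs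
`s₁₂, s₂₃, s₃₁` (`true` = negative) and at most one negative edge. Given
`S₁, S₂, S₃ ⊆ V(C₃*) = Fin 3` with `|S₁| ≥ 2`, `|S₂| ≥ 2` and `S₃ = V(C₃*)`, there
is an edge-sign preserving homomorphism of `T` to `C₃*` (a positive edge maps to
distinct vertices, a negative edge maps to a single vertex with its negative loop)
sending each `vᵢ` into `Sᵢ`. -/
theorem triangle_mapping_lemma_223 (s12 s23 s31 : Bool)
    (hneg : s12.toNat + s23.toNat + s31.toNat ≤ 1)
    (S1 S2 S3 : Finset (Fin 3)) (h1 : 2 ≤ S1.card) (h2 : 2 ≤ S2.card)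
    (h3 : S3 = Finset.univ) :
    ∃ a1 a2 a3 : Fin 3, a1 ∈ S1 ∧ a2 ∈ S2 ∧ a3 ∈ S3 ∧
      (if s12 then a1 = a2 else a1 ≠ a2) ∧
      (if s23 then a2 = a3 else a2 ≠ a3) ∧
      (if s31 then a3 = a1 else a3 ≠ a1) := by
  subst h3
  obtain ⟨x1, hx1, y1, hy1, hxy1⟩ := Finset.one_lt_card.mp h1
  obtain ⟨x2, hx2, y2, hy2, hxy2⟩ := Finset.one_lt_card.mp h2
  obtain ⟨a1, a2, a3, ha1, ha2, h12, h23, h31⟩ :=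
    triangle_mapping_key x1 y1 x2 y2 hxy1 hxy2 s12 s23 s31 hneg
  exact ⟨a1, a2, a3, by rcases ha1 with h|h <;> simp [h, hx1, hy1],
    by rcases ha2 with h|h <;> simp [h, hx2, hy2], Finset.mem_univ _, h12, h23, h31⟩
end

section
/- Let P be a signed path with endpoints x and y containing at most one negative edge, let S_x, S_y ⊆ V(C₃*) be nonempty, and let φ(x) ∈ S_x, φ(y) ∈ S_y be prescribed. Then φ extends to an edge-sign preserving homomorphism of P to C₃* unless either (1) P is a single positive edge or a negative path of length 2, with S_x = S_y and |S_x| = 1, or (2) P is a single negative edge and S_x ∩ S_y = ∅. -/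
/-- In `Fin 3` we can always avoid two given vertices. -/
lemma third_vertex : ∀ a b : Fin 3, ∃ c : Fin 3, c ≠ a ∧ c ≠ b := by decide

/-- Walks in K3: a proper walk of any length `m` from `a` to `b` exists,
provided `m = 0 → a = b` and `m = 1 → a ≠ b`. -/
lemma walk_exists : ∀ (m : ℕ) (a b : Fin 3), (m = 0 → a = b) → (m = 1 → a ≠ b) →
    ∃ g : ℕ → Fin 3, g 0 = a ∧ g m = b ∧ ∀ j < m, g j ≠ g (j + 1) := by
  intro m
  induction m with
  | zero =>
    intro a b h0 _
    exact ⟨fun _ => a, rfl, (h0 rfl).symm ▸ rfl, by omega⟩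
  | succ m ih =>
    intro a b h0 h1
    match m with
    | 0 =>
      refine ⟨fun j => if j = 0 then a else b, by simp, by simp, ?_⟩
      intro j hj
      interval_cases j
      simpa using h1 rfl
    | k + 1 =>
      obtain ⟨c, hca, hcb⟩ := third_vertex a b
      obtain ⟨g', hg0, hgm, hgstep⟩ := ih c b (by omega) (fun _ => hcb)
      refine ⟨fun j => if j = 0 then a else g' (j - 1), by simp, by simpa using hgm, ?_⟩
      intro j hj
      rcases Nat.eq_zero_or_pos j with rfl | hjpos
      · simpa [hg0] using hca.symm
      · have h1' : j ≠ 0 := by omega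
        have h2' : j + 1 ≠ 0 := by omega
        simp only [h1', h2', if_neg, ite_false]
        have hlt : j - 1 < k + 1 := by omega
        have := hgstep (j - 1) hlt
        have e : j - 1 + 1 = j + 1 - 1 := by omega
        rwa [e] at this

lemma pick_distinct (Sx Sy : Finset (Fin 3)) (hSx : Sx.Nonempty) (hSy : Sy.Nonempty)
    (h : ¬ (Sx = Sy ∧ Sx.card = 1)) : ∃ a ∈ Sx, ∃ b ∈ Sy, a ≠ b := by
  by_contra hc
  push_neg at hc
  obtain ⟨a, ha⟩ := hSx
  obtain ⟨b, hb⟩ := hSy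
  have hab : a = b := hc a ha b hb
  have hSxe : Sx = {b} := by
    apply Finset.eq_singleton_iff_unique_mem.mpr
    exact ⟨hab ▸ ha, fun x hx => hc x hx b hb⟩
  have hSye : Sy = {b} := by
    apply Finset.eq_singleton_iff_unique_mem.mpr
    exact ⟨hb, fun y hy => ((hc a ha y hy).symm.trans hab)⟩
  exact h ⟨hSxe.trans hSye.symm, by simp [hSxe]⟩

/-- Observation 2.6: Let `P` be a signed path of length `n ≥ 1` with edge signs
`sgn 0, …, sgn (n−1)` (`true` = negative), containing at most one negative edge.
Let `S_x, S_y ⊆ V(C₃*) = Fin 3` be nonempty sets of allowed colors for the two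
endpoints. Then there is an edge-sign preserving homomorphism `f` of `P` to `C₃*`
(each positive edge maps to distinct vertices, each negative edge maps to a single
vertex with its negative loop) with `f 0 ∈ S_x` and `f n ∈ S_y`, unless one of:
(1) `P` is a single positive edge or a negative path of length `2`, `S_x = S_y` and
`|S_x| = 1`; (2) `P` is a single negative edge and `S_x ∩ S_y = ∅`. -/
theorem path_extension_lemma (n : ℕ) (hn : 1 ≤ n) (sgn : ℕ → Bool)
    (hneg : ((Finset.range n).filter (fun k => sgn k = true)).card ≤ 1)
    (Sx Sy : Finset (Fin 3)) (hSx : Sx.Nonempty) (hSy : Sy.Nonempty)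
    (hexc1 : ¬ (((n = 1 ∧ sgn 0 = false) ∨
        (n = 2 ∧ (sgn 0 = true ∨ sgn 1 = true))) ∧ Sx = Sy ∧ Sx.card = 1))
    (hexc2 : ¬ (n = 1 ∧ sgn 0 = true ∧ Sx ∩ Sy = ∅)) :
    ∃ f : ℕ → Fin 3, f 0 ∈ Sx ∧ f n ∈ Sy ∧
      ∀ k < n, (if sgn k then f k = f (k + 1) else f k ≠ f (k + 1)) := by
  classical
  set P : ℕ → ℕ := fun k => ((Finset.range k).filter (fun i => sgn i = false)).card with hP
  have hp0 : P 0 = 0 := by simp [hP]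
  -- total count
  have hsum : P n + ((Finset.range n).filter (fun k => sgn k = true)).card = n := by
    have h1 := Finset.card_filter_add_card_filter_not
      (s := Finset.range n) (p := fun i => sgn i = true)
    have heq : (Finset.range n).filter (fun i => ¬ sgn i = true)
        = (Finset.range n).filter (fun i => sgn i = false) := by
      apply Finset.filter_congr
      intro i _
      simp
    rw [heq, Finset.card_range] at h1
    simp only [hP]
    omega
  have hPmono : ∀ k ≤ n, P k ≤ P n := by
    intro k hk
    apply Finset.card_le_card
    apply Finset.filter_subset_filter
    exact Finset.range_subset_range.mpr hk
  have hPtrue : ∀ k, sgn k = true → P (k+1) = P k := by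
    intro k hk
    simp [hP, Finset.range_add_one, Finset.filter_insert, hk]
  have hPfalse : ∀ k, sgn k = false → P (k+1) = P k + 1 := by
    intro k hk
    simp [hP, Finset.range_add_one, Finset.filter_insert, hk]
  -- choose endpoints
  have hchoice : ∃ a ∈ Sx, ∃ b ∈ Sy, (P n = 0 → a = b) ∧ (P n = 1 → a ≠ b) := by
    have htri : P n = 0 ∨ P n = 1 ∨ 2 ≤ P n := by omega
    rcases htri with hm0 | hm1 | hm2
    · -- P n = 0 : n = 1, sgn 0 = true
      have hn1 : n = 1 := by omega
      have hs0 : sgn 0 = true := by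
        by_contra hs
        have hf : P 1 = P 0 + 1 := hPfalse 0 (by simpa using hs)
        rw [hn1] at hm0
        omega
      have hne : Sx ∩ Sy ≠ ∅ := fun h => hexc2 ⟨hn1, hs0, h⟩
      obtain ⟨a, ha⟩ := Finset.nonempty_iff_ne_empty.mpr hne
      rw [Finset.mem_inter] at ha
      exact ⟨a, ha.1, a, ha.2, fun _ => rfl, by omega⟩
    · -- P n = 1 : n = 1 positive, or n = 2 with a negative edge
      have hn12 : n = 1 ∨ n = 2 := by omega
      have hkey : ¬ (Sx = Sy ∧ Sx.card = 1) := by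
        intro hk
        rcases hn12 with hn1 | hn2
        · have hs0 : sgn 0 = false := by
            by_contra hs
            have ht : P 1 = P 0 := hPtrue 0 (by simpa using hs)
            rw [hn1] at hm1
            omega
          exact hexc1 ⟨Or.inl ⟨hn1, hs0⟩, hk⟩
        · have hsor : sgn 0 = true ∨ sgn 1 = true := by
            by_contra hs
            push_neg at hs
            have h0 : P 1 = P 0 + 1 := hPfalse 0 (by simpa using hs.1)
            have h1 : P 2 = P 1 + 1 := hPfalse 1 (by simpa using hs.2)
            rw [hn2] at hm1
            omega
          exact hexc1 ⟨Or.inr ⟨hn2, hsor⟩, hk⟩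
      obtain ⟨a, ha, b, hb, hab⟩ := pick_distinct Sx Sy hSx hSy hkey
      exact ⟨a, ha, b, hb, by omega, fun _ => hab⟩
    · obtain ⟨a, ha⟩ := hSx
      obtain ⟨b, hb⟩ := hSy
      exact ⟨a, ha, b, hb, by omega, by omega⟩
  obtain ⟨a, ha, b, hb, h0, h1⟩ := hchoice
  obtain ⟨g, hg0, hgm, hgstep⟩ := walk_exists (P n) a b h0 h1
  refine ⟨fun k => g (P k), ?_, ?_, ?_⟩
  · simpa [hp0, hg0] using ha
  · simpa [hgm] using hb
  · intro k hk
    cases hs : sgn k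
    · -- positive edge
      rw [if_neg (by simp [hs])]
      show g (P k) ≠ g (P (k + 1))
      rw [hPfalse k hs]
      apply hgstep
      have hle := hPmono (k+1) (by omega)
      have hf := hPfalse k hs
      omega
    · rw [if_pos (by simp [hs])]
      show g (P k) = g (P (k + 1))
      rw [hPtrue k hs]
end
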